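/- arXiv:2211.14913 — 9 statements merged into one kernel-verified Lean document; each statement's English description precedes it below -/
import Mathlib

section
/- Let φ be a safetyLTL formula, i.e., a pure-future formula in negation normal form whose only temporal operators are wX (weak next) and R (release). For every finite trace σ = ⟨σ0, …, σn⟩ ∈ (2^Σ)^+, if σ is a model of φ, then the length-1 trace ⟨σ0⟩ is a model of φ. -/
/-- LTL+P formulas in negation normal form. -/
inductive LTLP (A : Type) : Type where
  | atom : A → LTLP A
  | natom : A → LTLP A
  | and : LTLP A → LTLP A → LTLP A
  | or : LTLP A → LTLP A → LTLP A
  | next : LTLP A → LTLP A            -- X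
  | wnext : LTLP A → LTLP A           -- wX
  | until_ : LTLP A → LTLP A → LTLP A -- U
  | release : LTLP A → LTLP A → LTLP A -- R
  | yest : LTLP A → LTLP A            -- Y
  | wyest : LTLP A → LTLP A           -- wY
  | since : LTLP A → LTLP A → LTLP A  -- S
  | trig : LTLP A → LTLP A → LTLP A   -- T

variable {A : Type}

/-- Satisfaction of an LTL+P formula at position `i` of a finite trace `σ`. -/
def finSat (σ : List (Set A)) : LTLP A → ℕ → Prop
  | .atom p, i => p ∈ σ.getD i ∅
  | .natom p, i => p ∉ σ.getD i ∅
  | .and φ ψ, i => finSat σ φ i ∧ finSat σ ψ i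
  | .or φ ψ, i => finSat σ φ i ∨ finSat σ ψ i
  | .next φ, i => i + 1 < σ.length ∧ finSat σ φ (i+1)
  | .wnext φ, i => i + 1 = σ.length ∨ finSat σ φ (i+1)
  | .until_ φ ψ, i => ∃ j, i ≤ j ∧ j < σ.length ∧ finSat σ ψ j ∧
      ∀ k, i ≤ k → k < j → finSat σ φ k
  | .release φ ψ, i => (∀ j, i ≤ j → j < σ.length → finSat σ ψ j) ∨
      ∃ k, i ≤ k ∧ k < σ.length ∧ finSat σ φ k ∧ ∀ j, i ≤ j → j ≤ k → finSat σ ψ j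
  | .yest φ, i => 0 < i ∧ finSat σ φ (i-1)
  | .wyest φ, i => i = 0 ∨ finSat σ φ (i-1)
  | .since φ ψ, i => ∃ j, j ≤ i ∧ finSat σ ψ j ∧ ∀ k, j < k → k ≤ i → finSat σ φ k
  | .trig φ ψ, i => (∀ j, j ≤ i → finSat σ ψ j) ∨
      ∃ k, k ≤ i ∧ finSat σ φ k ∧ ∀ j, k ≤ j → j ≤ i → finSat σ ψ j

/-- Satisfaction of an LTL+P formula at position `i` of an infinite trace `σ`. -/
def infSat (σ : ℕ → Set A) : LTLP A → ℕ → Prop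
  | .atom p, i => p ∈ σ i
  | .natom p, i => p ∉ σ i
  | .and φ ψ, i => infSat σ φ i ∧ infSat σ ψ i
  | .or φ ψ, i => infSat σ φ i ∨ infSat σ ψ i
  | .next φ, i => infSat σ φ (i+1)
  | .wnext φ, i => infSat σ φ (i+1)
  | .until_ φ ψ, i => ∃ j, i ≤ j ∧ infSat σ ψ j ∧ ∀ k, i ≤ k → k < j → infSat σ φ k
  | .release φ ψ, i => (∀ j, i ≤ j → infSat σ ψ j) ∨
      ∃ k, i ≤ k ∧ infSat σ φ k ∧ ∀ j, i ≤ j → j ≤ k → infSat σ ψ j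
  | .yest φ, i => 0 < i ∧ infSat σ φ (i-1)
  | .wyest φ, i => i = 0 ∨ infSat σ φ (i-1)
  | .since φ ψ, i => ∃ j, j ≤ i ∧ infSat σ ψ j ∧ ∀ k, j < k → k ≤ i → infSat σ φ k
  | .trig φ ψ, i => (∀ j, j ≤ i → infSat σ ψ j) ∨
      ∃ k, k ≤ i ∧ infSat σ φ k ∧ ∀ j, k ≤ j → j ≤ i → infSat σ ψ j

/-- Pure-future formulas: no past operators. -/
def pureFuture : LTLP A → Prop
  | .atom _ | .natom _ => True
  | .and φ ψ | .or φ ψ | .until_ φ ψ | .release φ ψ => pureFuture φ ∧ pureFuture ψ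
  | .next φ | .wnext φ => pureFuture φ
  | .yest _ | .wyest _ | .since _ _ | .trig _ _ => False

/-- Pure-past formulas: no future operators. -/
def purePast : LTLP A → Prop
  | .atom _ | .natom _ => True
  | .and φ ψ | .or φ ψ | .since φ ψ | .trig φ ψ => purePast φ ∧ purePast ψ
  | .yest φ | .wyest φ => purePast φ
  | .next _ | .wnext _ | .until_ _ _ | .release _ _ => False

/-- safetyLTL: pure-future NNF formulas whose only temporal operators are wX and R. -/
def isSafetyLTL : LTLP A → Prop
  | .atom _ | .natom _ => True
  | .and φ ψ | .or φ ψ | .release φ ψ => isSafetyLTL φ ∧ isSafetyLTL ψ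
  | .wnext φ => isSafetyLTL φ
  | .next _ | .until_ _ _ | .yest _ | .wyest _ | .since _ _ | .trig _ _ => False

/-- cosafetyLTL: pure-future NNF formulas whose only temporal operators are X and U. -/
def isCosafetyLTL : LTLP A → Prop
  | .atom _ | .natom _ => True
  | .and φ ψ | .or φ ψ | .until_ φ ψ => isCosafetyLTL φ ∧ isCosafetyLTL ψ
  | .next φ => isCosafetyLTL φ
  | .wnext _ | .release _ _ | .yest _ | .wyest _ | .since _ _ | .trig _ _ => False

/-- ⊥ := p ∧ ¬p (for some proposition letter p). -/
def LTLP.fls (p : A) : LTLP A := .and (.atom p) (.natom p)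
/-- ⊤ := p ∨ ¬p (for some proposition letter p). -/
def LTLP.tru (p : A) : LTLP A := .or (.atom p) (.natom p)
/-- G φ := ⊥ R φ. -/
def LTLP.G (p : A) (φ : LTLP A) : LTLP A := .release (LTLP.fls p) φ
/-- F φ := ⊤ U φ. -/
def LTLP.F (p : A) (φ : LTLP A) : LTLP A := .until_ (LTLP.tru p) φ

/-- Relabelling of proposition letters. -/
def LTLP.map {A B : Type} (h : A → B) : LTLP A → LTLP B
  | .atom p => .atom (h p)
  | .natom p => .natom (h p)
  | .and φ ψ => .and (φ.map h) (ψ.map h)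
  | .or φ ψ => .or (φ.map h) (ψ.map h)
  | .next φ => .next (φ.map h)
  | .wnext φ => .wnext (φ.map h)
  | .until_ φ ψ => .until_ (φ.map h) (ψ.map h)
  | .release φ ψ => .release (φ.map h) (ψ.map h)
  | .yest φ => .yest (φ.map h)
  | .wyest φ => .wyest (φ.map h)
  | .since φ ψ => .since (φ.map h) (ψ.map h)
  | .trig φ ψ => .trig (φ.map h) (ψ.map h)

/-- The translation f over the alphabet extended with the fresh letter `endt`
(encoded as `none`, with letters of Σ encoded as `some p`). -/
def ftr : LTLP A → LTLP (Option A)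
  | .atom p => .atom (some p)
  | .natom p => .natom (some p)
  | .and φ ψ => .and (ftr φ) (ftr ψ)
  | .or φ ψ => .or (ftr φ) (ftr ψ)
  | .next φ => .next (.and (.natom none) (ftr φ))
  | .wnext φ => .next (.or (.atom none) (ftr φ))  -- X(¬endt → f φ)
  | .until_ φ ψ => .until_ (ftr φ) (.and (.natom none) (ftr ψ))
  | .release φ ψ => .or (.until_ (ftr ψ) (.and (ftr ψ) (.next (.atom none))))
      (.until_ (ftr ψ) (.and (ftr φ) (ftr ψ)))
  | .yest φ => .yest (ftr φ)
  | .wyest φ => .wyest (ftr φ)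
  | .since φ ψ => .since (ftr φ) (ftr ψ)
  | .trig φ ψ => .trig (ftr φ) (ftr ψ)

/-- g(φ) := ¬endt ∧ f(φ) ∧ ((¬endt) U endt). -/
def gtr (φ : LTLP A) : LTLP (Option A) :=
  .and (.natom none) (.and (ftr φ) (.until_ (.natom none) (.atom none)))

/-- The outcome trace res(s,𝒰) of a (Mealy, Environment-first) strategy. -/
def resTr {C U : Type} (s : List (Set U) → Set C) (env : ℕ → Set U) : ℕ → Set (C ⊕ U) :=
  fun i => Sum.elim (fun c => c ∈ s ((List.range (i+1)).map env)) (fun u => u ∈ env i)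

/-- Realizability over infinite traces. -/
def RealizableInf {C U : Type} (φ : LTLP (C ⊕ U)) : Prop :=
  ∃ s : List (Set U) → Set C, ∀ env : ℕ → Set U, infSat (resTr s env) φ 0

/-- Realizability over finite traces. -/
def RealizableFin {C U : Type} (φ : LTLP (C ⊕ U)) : Prop :=
  ∃ s : List (Set U) → Set C, ∀ env : ℕ → Set U, ∃ k : ℕ,
    finSat ((List.range (k+1)).map (resTr s env)) φ 0

lemma safety_truncate {A : Type} (φ : LTLP A) (hφ : isSafetyLTL φ)
    (σ : List (Set A)) (m : ℕ) (hm : m ≤ σ.length) :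
    ∀ i, i < m → finSat σ φ i → finSat (σ.take m) φ i := by
  have hlen : (σ.take m).length = m := by simp [List.length_take]; omega
  induction φ with
  | atom p =>
      intro i hi h
      simpa [finSat, List.getD_eq_getElem?_getD, List.getElem?_take, hi] using h
  | natom p =>
      intro i hi h
      simpa [finSat, List.getD_eq_getElem?_getD, List.getElem?_take, hi] using h
  | and φ ψ ihφ ihψ =>
      intro i hi h
      exact ⟨ihφ hφ.1 i hi h.1, ihψ hφ.2 i hi h.2⟩
  | or φ ψ ihφ ihψ =>
      intro i hi h
      exact h.elim (fun h => Or.inl (ihφ hφ.1 i hi h)) (fun h => Or.inr (ihψ hφ.2 i hi h))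
  | wnext φ ih =>
      intro i hi h
      rcases h with h | h
      · left; omega
      · by_cases hlt : i + 1 < m
        · right; exact ih hφ (i+1) hlt h
        · left; omega
  | release φ ψ ihφ ihψ =>
      intro i hi h
      rcases h with h | ⟨k, hik, hk, hφk, hψ⟩
      · left; intro j hij hj
        exact ihψ hφ.2 j (by omega) (h j hij (by omega))
      · by_cases hkm : k < m
        · right
          exact ⟨k, hik, by omega, ihφ hφ.1 k hkm hφk,
            fun j hij hjk => ihψ hφ.2 j (by omega) (hψ j hij hjk)⟩
        · left; intro j hij hj
          exact ihψ hφ.2 j (by omega) (hψ j hij (by omega))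
  | next φ ih => exact absurd hφ (by simp [isSafetyLTL])
  | until_ φ ψ _ _ => exact absurd hφ (by simp [isSafetyLTL])
  | yest φ _ => exact absurd hφ (by simp [isSafetyLTL])
  | wyest φ _ => exact absurd hφ (by simp [isSafetyLTL])
  | since φ ψ _ _ => exact absurd hφ (by simp [isSafetyLTL])
  | trig φ ψ _ _ => exact absurd hφ (by simp [isSafetyLTL])

/-- If a finite trace `σ0 :: rest` is a model of a safetyLTL formula `φ`,
then the length-1 trace `[σ0]` is a model of `φ`. -/
theorem stmt2 {Sigma : Type} [Fintype Sigma] (φ : LTLP Sigma) (hφ : isSafetyLTL φ)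
    (σ0 : Set Sigma) (rest : List (Set Sigma))
    (h : finSat (σ0 :: rest) φ 0) :
    finSat [σ0] φ 0 := by
  have := safety_truncate φ hφ (σ0 :: rest) 1 (by simp) 0 (by omega) h
  simpa using this
end

section
/- Let α be a pure-past LTL+P formula and let φ = G α. For every finite trace σ = ⟨σ0, …, σn⟩ ∈ (2^Σ)^+, if σ is a model of φ (under finite-trace semantics), then the length-1 trace ⟨σ0⟩ is a model of φ. -/
variable {A : Type}

lemma purePast_congr (α : LTLP A) (hα : purePast α) (σ τ : List (Set A)) :
    ∀ i, (∀ j, j ≤ i → σ.getD j ∅ = τ.getD j ∅) → (finSat σ α i ↔ finSat τ α i) := by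
  induction α with
  | atom p => intro i h; simp only [finSat]; rw [h i le_rfl]
  | natom p => intro i h; simp only [finSat]; rw [h i le_rfl]
  | and φ ψ ih1 ih2 =>
    intro i h; exact and_congr (ih1 hα.1 i h) (ih2 hα.2 i h)
  | or φ ψ ih1 ih2 =>
    intro i h; exact or_congr (ih1 hα.1 i h) (ih2 hα.2 i h)
  | yest φ ih =>
    intro i h
    exact and_congr Iff.rfl (ih hα (i-1) fun j hj => h j (hj.trans (Nat.sub_le _ _)))
  | wyest φ ih =>
    intro i h
    exact or_congr Iff.rfl (ih hα (i-1) fun j hj => h j (hj.trans (Nat.sub_le _ _)))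
  | since φ ψ ih1 ih2 =>
    intro i h
    simp only [finSat]
    apply exists_congr; intro j
    constructor
    · rintro ⟨hji, hψ, hφ⟩
      exact ⟨hji, (ih2 hα.2 j (fun l hl => h l (hl.trans hji))).mp hψ,
        fun k hk1 hk2 => (ih1 hα.1 k (fun l hl => h l (hl.trans hk2))).mp (hφ k hk1 hk2)⟩
    · rintro ⟨hji, hψ, hφ⟩
      exact ⟨hji, (ih2 hα.2 j (fun l hl => h l (hl.trans hji))).mpr hψ,
        fun k hk1 hk2 => (ih1 hα.1 k (fun l hl => h l (hl.trans hk2))).mpr (hφ k hk1 hk2)⟩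
  | trig φ ψ ih1 ih2 =>
    intro i h
    simp only [finSat]
    apply or_congr
    · constructor
      · intro hf j hj
        exact (ih2 hα.2 j (fun l hl => h l (hl.trans hj))).mp (hf j hj)
      · intro hf j hj
        exact (ih2 hα.2 j (fun l hl => h l (hl.trans hj))).mpr (hf j hj)
    · apply exists_congr; intro k
      constructor
      · rintro ⟨hki, hφ, hψ⟩
        exact ⟨hki, (ih1 hα.1 k (fun l hl => h l (hl.trans hki))).mp hφ,
          fun j hj1 hj2 => (ih2 hα.2 j (fun l hl => h l (hl.trans hj2))).mp (hψ j hj1 hj2)⟩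
      · rintro ⟨hki, hφ, hψ⟩
        exact ⟨hki, (ih1 hα.1 k (fun l hl => h l (hl.trans hki))).mpr hφ,
          fun j hj1 hj2 => (ih2 hα.2 j (fun l hl => h l (hl.trans hj2))).mpr (hψ j hj1 hj2)⟩
  | next φ ih => exact absurd hα id
  | wnext φ ih => exact absurd hα id
  | until_ φ ψ ih1 ih2 => exact absurd hα id
  | release φ ψ ih1 ih2 => exact absurd hα id

/-- If a finite trace `σ0 :: rest` is a model of `G α` with `α` pure past,
then the length-1 trace `[σ0]` is a model of `G α`. -/
theorem stmt3 {Sigma : Type} [Fintype Sigma] (p : Sigma) (α : LTLP Sigma)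
    (hα : purePast α) (σ0 : Set Sigma) (rest : List (Set Sigma))
    (h : finSat (σ0 :: rest) (LTLP.G p α) 0) :
    finSat [σ0] (LTLP.G p α) 0 := by
  have hc := purePast_congr α hα (σ0 :: rest) [σ0] 0
    (by intro j hj; interval_cases j; rfl)
  simp only [LTLP.G, LTLP.fls, finSat] at h ⊢
  have hα0 : finSat (σ0 :: rest) α 0 := by
    rcases h with hall | ⟨k, _, _, ⟨h1, h2⟩, _⟩
    · exact hall 0 le_rfl (by simp)
    · exact absurd h1 h2
  left
  intro j _ hj
  simp only [List.length_singleton] at hj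
  interval_cases j
  exact hc.mp hα0
end

section
/- Let φ be either a safetyLTL formula (a pure-future NNF formula whose only temporal operators are wX and R) or a formula of the form G α with α pure past. Then φ is satisfiable over finite traces if and only if there exists σ0 ∈ 2^Σ such that the length-1 trace ⟨σ0⟩ is a model of φ. -/
variable {A : Type}

lemma take_getD {A : Type} (σ : List (Set A)) (m i : ℕ) (h : i < m) :
    (σ.take m).getD i ∅ = σ.getD i ∅ := by
  simp [List.getD_eq_getElem?_getD, List.getElem?_take, h]

lemma safety_prefix {A : Type} (φ : LTLP A) (h : isSafetyLTL φ) :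
    ∀ (σ : List (Set A)) (m i : ℕ), i < m → m ≤ σ.length →
    finSat σ φ i → finSat (σ.take m) φ i := by
  induction φ with
  | atom p =>
    intro σ m i him hm hs
    simp only [finSat] at hs ⊢
    rw [take_getD σ m i him]; exact hs
  | natom p =>
    intro σ m i him hm hs
    simp only [finSat] at hs ⊢
    rw [take_getD σ m i him]; exact hs
  | and φ ψ ihφ ihψ =>
    intro σ m i him hm hs
    exact ⟨ihφ h.1 σ m i him hm hs.1, ihψ h.2 σ m i him hm hs.2⟩
  | or φ ψ ihφ ihψ =>
    intro σ m i him hm hs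
    rcases hs with hs | hs
    · exact Or.inl (ihφ h.1 σ m i him hm hs)
    · exact Or.inr (ihψ h.2 σ m i him hm hs)
  | wnext φ ih =>
    intro σ m i him hm hs
    have hlen : (σ.take m).length = m := by
      simp [List.length_take, Nat.min_eq_left hm]
    rcases Nat.lt_or_ge (i+1) m with h1 | h1
    · rcases hs with hs | hs
      · omega
      · exact Or.inr (ih h σ m (i+1) h1 hm hs)
    · left; omega
  | release φ ψ ihφ ihψ =>
    intro σ m i him hm hs
    have hlen : (σ.take m).length = m := by
      simp [List.length_take, Nat.min_eq_left hm]
    rcases hs with hs | ⟨k, hik, hk, hφk, hψk⟩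
    · left; intro j hij hj
      rw [hlen] at hj
      exact ihψ h.2 σ m j hj hm (hs j hij (lt_of_lt_of_le hj hm))
    · rcases Nat.lt_or_ge k m with h1 | h1
      · right
        refine ⟨k, hik, by omega, ihφ h.1 σ m k h1 hm hφk, ?_⟩
        intro j hij hjk
        exact ihψ h.2 σ m j (by omega) hm (hψk j hij hjk)
      · left; intro j hij hj
        rw [hlen] at hj
        exact ihψ h.2 σ m j hj hm (hψk j hij (by omega))
  | next φ ih => exact absurd h not_false
  | until_ φ ψ _ _ => exact absurd h not_false
  | yest φ _ => exact absurd h not_false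
  | wyest φ _ => exact absurd h not_false
  | since φ ψ _ _ => exact absurd h not_false
  | trig φ ψ _ _ => exact absurd h not_false

lemma purePast_mono {A : Type} (α : LTLP A) (h : purePast α) :
    ∀ (σ τ : List (Set A)) (i : ℕ), (∀ j, j ≤ i → σ.getD j ∅ = τ.getD j ∅) →
    finSat σ α i → finSat τ α i := by
  induction α with
  | atom p =>
    intro σ τ i he hs
    simp only [finSat] at hs ⊢
    rw [← he i le_rfl]; exact hs
  | natom p =>
    intro σ τ i he hs
    simp only [finSat] at hs ⊢
    rw [← he i le_rfl]; exact hs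
  | and φ ψ ihφ ihψ =>
    intro σ τ i he hs
    exact ⟨ihφ h.1 σ τ i he hs.1, ihψ h.2 σ τ i he hs.2⟩
  | or φ ψ ihφ ihψ =>
    intro σ τ i he hs
    rcases hs with hs | hs
    · exact Or.inl (ihφ h.1 σ τ i he hs)
    · exact Or.inr (ihψ h.2 σ τ i he hs)
  | yest φ ih =>
    intro σ τ i he hs
    exact ⟨hs.1, ih h σ τ (i-1) (fun j hj => he j (by omega)) hs.2⟩
  | wyest φ ih =>
    intro σ τ i he hs
    rcases hs with hs | hs
    · exact Or.inl hs
    · exact Or.inr (ih h σ τ (i-1) (fun j hj => he j (by omega)) hs)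
  | since φ ψ ihφ ihψ =>
    intro σ τ i he hs
    obtain ⟨j, hji, hψj, hk⟩ := hs
    exact ⟨j, hji, ihψ h.2 σ τ j (fun l hl => he l (by omega)) hψj,
      fun k hjk hki => ihφ h.1 σ τ k (fun l hl => he l (by omega)) (hk k hjk hki)⟩
  | trig φ ψ ihφ ihψ =>
    intro σ τ i he hs
    rcases hs with hs | ⟨k, hki, hφk, hψk⟩
    · exact Or.inl (fun j hj => ihψ h.2 σ τ j (fun l hl => he l (by omega)) (hs j hj))
    · exact Or.inr ⟨k, hki, ihφ h.1 σ τ k (fun l hl => he l (by omega)) hφk,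
        fun j hkj hji => ihψ h.2 σ τ j (fun l hl => he l (by omega)) (hψk j hkj hji)⟩
  | next φ _ => exact absurd h not_false
  | wnext φ _ => exact absurd h not_false
  | until_ φ ψ _ _ => exact absurd h not_false
  | release φ ψ _ _ => exact absurd h not_false

/-- A safetyLTL formula, or a formula `G α` with `α` pure past, is satisfiable
over finite traces iff it has a model of length 1. -/
theorem stmt4 {Sigma : Type} [Fintype Sigma] (φ : LTLP Sigma)
    (hφ : isSafetyLTL φ ∨ ∃ (p : Sigma) (α : LTLP Sigma), purePast α ∧ φ = LTLP.G p α) :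
    (∃ σ : List (Set Sigma), σ ≠ [] ∧ finSat σ φ 0) ↔
      (∃ σ0 : Set Sigma, finSat [σ0] φ 0) := by
  constructor
  · rintro ⟨σ, hne, hs⟩
    obtain ⟨a, rest, rfl⟩ : ∃ a rest, σ = a :: rest := by
      cases σ with
      | nil => exact absurd rfl hne
      | cons a rest => exact ⟨a, rest, rfl⟩
    rcases hφ with hsaf | ⟨p, α, hpp, rfl⟩
    · refine ⟨a, ?_⟩
      have h1 := safety_prefix φ hsaf (a :: rest) 1 0 one_pos (by simp) hs
      simpa using h1
    · refine ⟨a, ?_⟩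
      rcases hs with hs | ⟨k, _, _, hf, _⟩
      · have hα0 : finSat (a :: rest) α 0 := hs 0 le_rfl (by simp)
        left
        intro j _ hj
        simp only [List.length_singleton] at hj
        interval_cases j
        exact purePast_mono α hpp (a :: rest) [a] 0
          (fun l hl => by interval_cases l; rfl) hα0
      · simp [LTLP.fls, finSat] at hf
  · rintro ⟨σ0, hs⟩
    exact ⟨[σ0], by simp, hs⟩
end

section
/- Let φ be a pure-future LTL formula over Σ (in NNF), let σ ∈ (2^Σ)^+ be a finite trace of length m, and let σ' ∈ (2^(Σ∪{endt}))^ω be any infinite trace such that σ'_i ∩ Σ = σ_i for all 0 ≤ i < m, endt ∈ σ'_m, and endt ∉ σ'_j for all 0 ≤ j < m. Then for every position 0 ≤ i < m, if σ,i ⊨ φ (finite-trace semantics) then σ',i ⊨ f(φ) (infinite-trace semantics). -/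
variable {A : Type}

/-- If `σ'` agrees with the finite trace `σ` on Σ on positions `< |σ|`, has
`endt` at position `|σ|` and not before, then `σ,i ⊨ φ` implies `σ',i ⊨ f(φ)`. -/
theorem stmt6 {Sigma : Type} [Fintype Sigma] (φ : LTLP Sigma) (hφ : pureFuture φ)
    (σ : List (Set Sigma)) (hσ : σ ≠ []) (σ' : ℕ → Set (Option Sigma))
    (h1 : ∀ i < σ.length, ∀ p : Sigma, some p ∈ σ' i ↔ p ∈ σ.getD i ∅)
    (h2 : none ∈ σ' σ.length)
    (h3 : ∀ j < σ.length, none ∉ σ' j)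
    (i : ℕ) (hi : i < σ.length) (h : finSat σ φ i) :
    infSat σ' (ftr φ) i := by
  induction φ generalizing i with
  | atom p => exact (h1 i hi p).mpr h
  | natom p => exact fun hc => h ((h1 i hi p).mp hc)
  | and φ ψ ihφ ihψ => exact ⟨ihφ hφ.1 i hi h.1, ihψ hφ.2 i hi h.2⟩
  | or φ ψ ihφ ihψ =>
      rcases h with h | h
      · exact Or.inl (ihφ hφ.1 i hi h)
      · exact Or.inr (ihψ hφ.2 i hi h)
  | next φ ihφ =>
      exact ⟨h3 _ h.1, ihφ hφ i.succ h.1 h.2⟩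
  | wnext φ ihφ =>
      rcases Nat.lt_or_ge (i+1) σ.length with hlt | hge
      · rcases h with h | h
        · omega
        · exact Or.inr (ihφ hφ (i+1) hlt h)
      · have : i + 1 = σ.length := by omega
        exact Or.inl (this ▸ h2)
  | until_ φ ψ ihφ ihψ =>
      obtain ⟨j, hij, hjl, hψ, hall⟩ := h
      exact ⟨j, hij, ⟨h3 j hjl, ihψ hφ.2 j hjl hψ⟩,
        fun k hik hkj => ihφ hφ.1 k (by omega) (hall k hik hkj)⟩
  | release φ ψ ihφ ihψ =>
      rcases h with hall | ⟨k, hik, hkl, hφk, hall⟩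
      · left
        have hlen : 1 ≤ σ.length := by
          cases σ with
          | nil => exact absurd rfl hσ
          | cons a l => simp
        refine ⟨σ.length - 1, by omega,
          ⟨ihψ hφ.2 _ (by omega) (hall _ (by omega) (by omega)), ?_⟩,
          fun k hik hkj => ihψ hφ.2 k (by omega) (hall k hik (by omega))⟩
        show none ∈ σ' (σ.length - 1 + 1)
        have : σ.length - 1 + 1 = σ.length := by omega
        rw [this]; exact h2
      · right
        exact ⟨k, hik, ⟨ihφ hφ.1 k hkl hφk, ihψ hφ.2 k hkl (hall k hik le_rfl)⟩,
          fun j hij hjk => ihψ hφ.2 j (by omega) (hall j hij hjk.le)⟩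
  | yest φ ihφ => exact absurd hφ id
  | wyest φ ihφ => exact absurd hφ id
  | since φ ψ ihφ ihψ => exact absurd hφ id
  | trig φ ψ ihφ ihψ => exact absurd hφ id
end

section
/- The logic cosafetyLTL is suffix independent: for every cosafetyLTL formula φ over Σ (a pure-future NNF formula whose only temporal operators are X and U), the language of infinite-trace models of φ equals L_F(φ)·(2^Σ)^ω, where L_F(φ) is the language of finite-trace models of φ. That is, an infinite trace σ ∈ (2^Σ)^ω is a model of φ if and only if σ has a nonempty finite prefix that is a model of φ under finite-trace semantics. -/
variable {A : Type}

/-! Satisfaction of a cosafety formula at a position is witnessed by finitely many positions of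
the trace. Hence, by induction on the formula, an infinite trace satisfying φ at `i` has all
sufficiently long prefixes satisfying φ at `i`: for `U`, the witness and the finitely many
positions before it each need a long enough prefix, and the filter `atTop` takes care of the
maximum. Conversely, a prefix model is an infinite model since `X` and `U` only look at
positions inside the prefix. -/

open Filter

theorem List.getD_map_range {α : Type*} (σ : ℕ → α) (d : α) {n i : ℕ} (h : i < n) :
    ((List.range n).map σ).getD i d = σ i := by
  rw [List.getD_eq_getElem _ _ (by simpa using h), List.getElem_map, List.getElem_range]

theorem infSat_of_finSat_map_range (σ : ℕ → Set A) {φ : LTLP A} (hφ : isCosafetyLTL φ)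
    {n i : ℕ} (hi : i < n) (h : finSat ((List.range n).map σ) φ i) : infSat σ φ i := by
  induction φ generalizing i with
  | atom p | natom p => simpa only [finSat, infSat, List.getD_map_range σ _ hi] using h
  | and φ ψ ihφ ihψ => exact ⟨ihφ hφ.1 hi h.1, ihψ hφ.2 hi h.2⟩
  | or φ ψ ihφ ihψ => exact h.imp (ihφ hφ.1 hi) (ihψ hφ.2 hi)
  | next φ ih =>
    simp only [finSat, List.length_map, List.length_range] at h
    exact ih hφ h.1 h.2
  | until_ φ ψ ihφ ihψ =>
    simp only [finSat, List.length_map, List.length_range] at h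
    obtain ⟨j, hij, hjn, hψ, hφk⟩ := h
    exact ⟨j, hij, ihψ hφ.2 hjn hψ,
      fun k hik hkj => ihφ hφ.1 (hkj.trans hjn) (hφk k hik hkj)⟩
  | wnext | release | yest | wyest | since | trig => exact hφ.elim

theorem eventually_finSat_map_range_of_infSat (σ : ℕ → Set A) {φ : LTLP A}
    (hφ : isCosafetyLTL φ) {i : ℕ} (h : infSat σ φ i) :
    ∀ᶠ n in atTop, finSat ((List.range n).map σ) φ i := by
  induction φ generalizing i with
  | atom p | natom p =>
    filter_upwards [eventually_gt_atTop i] with n hn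
    simpa only [finSat, infSat, List.getD_map_range σ _ hn] using h
  | and φ ψ ihφ ihψ => exact (ihφ hφ.1 h.1).and (ihψ hφ.2 h.2)
  | or φ ψ ihφ ihψ =>
    rcases h with h | h
    · exact (ihφ hφ.1 h).mono fun _ => Or.inl
    · exact (ihψ hφ.2 h).mono fun _ => Or.inr
  | next φ ih =>
    filter_upwards [eventually_gt_atTop (i + 1), ih hφ h] with n hn hsat
    simpa only [finSat, List.length_map, List.length_range] using ⟨hn, hsat⟩
  | until_ φ ψ ihφ ihψ =>
    obtain ⟨j, hij, hψ, hφk⟩ := h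
    have hbefore : ∀ᶠ n in atTop, ∀ k ∈ Set.Ico i j, finSat ((List.range n).map σ) φ k :=
      (eventually_all_finite (Set.finite_Ico i j)).2 fun k hk => ihφ hφ.1 (hφk k hk.1 hk.2)
    filter_upwards [eventually_gt_atTop j, ihψ hφ.2 hψ, hbefore] with n hjn hψn hφn
    simpa only [finSat, List.length_map, List.length_range] using
      ⟨j, hij, hjn, hψn, fun k hik hkj => hφn k ⟨hik, hkj⟩⟩
  | wnext | release | yest | wyest | since | trig => exact hφ.elim

theorem stmt7_general {Sigma : Type} (φ : LTLP Sigma) (hφ : isCosafetyLTL φ)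
    (σ : ℕ → Set Sigma) :
    infSat σ φ 0 ↔ ∃ k : ℕ, finSat ((List.range (k+1)).map σ) φ 0 := by
  constructor
  · intro h
    obtain ⟨n, hsat, hn⟩ :=
      ((eventually_finSat_map_range_of_infSat σ hφ h).and (eventually_gt_atTop 0)).exists
    obtain ⟨k, rfl⟩ := Nat.exists_eq_add_one_of_ne_zero hn.ne'
    exact ⟨k, hsat⟩
  · rintro ⟨k, h⟩
    exact infSat_of_finSat_map_range σ hφ k.succ_pos h

/-- cosafetyLTL is suffix independent: an infinite trace is a model of a
cosafetyLTL formula iff some nonempty finite prefix of it is a model. -/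
theorem stmt7 {Sigma : Type} [Fintype Sigma] (φ : LTLP Sigma) (hφ : isCosafetyLTL φ)
    (σ : ℕ → Set Sigma) :
    infSat σ φ 0 ↔ ∃ k : ℕ, finSat ((List.range (k+1)).map σ) φ 0 :=
  stmt7_general φ hφ σ
end

section
/- Let φ be either a cosafetyLTL formula (a pure-future NNF formula whose only temporal operators are X and U) or a formula of the form F α with α pure past. Then φ is satisfiable over infinite traces if and only if φ is satisfiable over finite traces. -/
variable {A : Type}

lemma pref_getD (σ : ℕ → Set A) (m k : ℕ) (h : k < m) :
    ((List.range m).map σ).getD k ∅ = σ k := by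
  rw [List.getD_eq_getElem?_getD]
  simp [List.getElem?_range, h]

lemma cos_inf_to_fin (σ : ℕ → Set A) :
    ∀ (φ : LTLP A), isCosafetyLTL φ → ∀ i, infSat σ φ i →
      ∃ n, i < n ∧ ∀ m, n ≤ m → finSat ((List.range m).map σ) φ i := by
  intro φ
  induction φ with
  | atom p =>
    intro _ i h
    refine ⟨i + 1, Nat.lt_succ_self i, fun m hm => ?_⟩
    show p ∈ ((List.range m).map σ).getD i ∅
    rw [pref_getD σ m i (by omega)]; exact h
  | natom p =>
    intro _ i h
    refine ⟨i + 1, Nat.lt_succ_self i, fun m hm => ?_⟩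
    show p ∉ ((List.range m).map σ).getD i ∅
    rw [pref_getD σ m i (by omega)]; exact h
  | and φ ψ ihφ ihψ =>
    rintro ⟨hφ, hψ⟩ i ⟨h1, h2⟩
    obtain ⟨n1, hn1, h1'⟩ := ihφ hφ i h1
    obtain ⟨n2, hn2, h2'⟩ := ihψ hψ i h2
    exact ⟨max n1 n2, lt_max_of_lt_left hn1, fun m hm =>
      ⟨h1' m (le_trans (le_max_left _ _) hm), h2' m (le_trans (le_max_right _ _) hm)⟩⟩
  | or φ ψ ihφ ihψ =>
    rintro ⟨hφ, hψ⟩ i (h1 | h2)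
    · obtain ⟨n1, hn1, h1'⟩ := ihφ hφ i h1
      exact ⟨n1, hn1, fun m hm => Or.inl (h1' m hm)⟩
    · obtain ⟨n2, hn2, h2'⟩ := ihψ hψ i h2
      exact ⟨n2, hn2, fun m hm => Or.inr (h2' m hm)⟩
  | next φ ih =>
    intro hφ i h
    obtain ⟨n, hn, h'⟩ := ih hφ (i + 1) h
    refine ⟨n, by omega, fun m hm => ⟨by simpa using (by omega : i + 1 < m), h' m hm⟩⟩
  | until_ φ ψ ihφ ihψ =>
    rintro ⟨hφ, hψ⟩ i ⟨j, hij, hj, hk⟩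
    obtain ⟨n0, hn0j, hn0⟩ := ihψ hψ j hj
    have hch : ∀ k, ∃ n, (i ≤ k ∧ k < j) →
        (k < n ∧ ∀ m, n ≤ m → finSat ((List.range m).map σ) φ k) := by
      intro k
      by_cases h : i ≤ k ∧ k < j
      · obtain ⟨n, hn⟩ := ihφ hφ k (hk k h.1 h.2)
        exact ⟨n, fun _ => hn⟩
      · exact ⟨0, fun h' => absurd h' h⟩
    choose f hf using hch
    refine ⟨max n0 ((Finset.range j).sup f), lt_max_of_lt_left (by omega), fun m hm => ?_⟩
    refine ⟨j, hij, ?_, hn0 m (le_trans (le_max_left _ _) hm), fun k hik hkj => ?_⟩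
    · simp only [List.length_map, List.length_range]; omega
    · exact (hf k ⟨hik, hkj⟩).2 m
        (le_trans (le_trans (Finset.le_sup (Finset.mem_range.mpr hkj)) (le_max_right _ _)) hm)
  | wnext _ _ => exact fun h => absurd h not_false
  | release _ _ _ _ => exact fun h => absurd h not_false
  | yest _ _ => exact fun h => absurd h not_false
  | wyest _ _ => exact fun h => absurd h not_false
  | since _ _ _ _ => exact fun h => absurd h not_false
  | trig _ _ _ _ => exact fun h => absurd h not_false

lemma cos_fin_to_inf (τ : List (Set A)) :
    ∀ (φ : LTLP A), isCosafetyLTL φ → ∀ i, finSat τ φ i →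
      infSat (fun k => τ.getD k ∅) φ i := by
  intro φ
  induction φ with
  | atom p => exact fun _ i h => h
  | natom p => exact fun _ i h => h
  | and φ ψ ihφ ihψ =>
    rintro ⟨hφ, hψ⟩ i ⟨h1, h2⟩; exact ⟨ihφ hφ i h1, ihψ hψ i h2⟩
  | or φ ψ ihφ ihψ =>
    rintro ⟨hφ, hψ⟩ i (h1 | h2)
    · exact Or.inl (ihφ hφ i h1)
    · exact Or.inr (ihψ hψ i h2)
  | next φ ih => rintro hφ i ⟨_, h⟩; exact ih hφ (i + 1) h
  | until_ φ ψ ihφ ihψ =>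
    rintro ⟨hφ, hψ⟩ i ⟨j, hij, _, hj, hk⟩
    exact ⟨j, hij, ihψ hψ j hj, fun k h1 h2 => ihφ hφ k (hk k h1 h2)⟩
  | wnext _ _ => exact fun h => absurd h not_false
  | release _ _ _ _ => exact fun h => absurd h not_false
  | yest _ _ => exact fun h => absurd h not_false
  | wyest _ _ => exact fun h => absurd h not_false
  | since _ _ _ _ => exact fun h => absurd h not_false
  | trig _ _ _ _ => exact fun h => absurd h not_false

lemma past_iff (σ : ℕ → Set A) (τ : List (Set A)) :
    ∀ (α : LTLP A), purePast α → ∀ i, (∀ k, k ≤ i → σ k = τ.getD k ∅) →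
      (infSat σ α i ↔ finSat τ α i) := by
  intro α
  induction α with
  | atom p => intro _ i h; rw [infSat, finSat, h i le_rfl]
  | natom p => intro _ i h; rw [infSat, finSat, h i le_rfl]
  | and φ ψ ihφ ihψ =>
    rintro ⟨hφ, hψ⟩ i h
    rw [infSat, finSat, ihφ hφ i h, ihψ hψ i h]
  | or φ ψ ihφ ihψ =>
    rintro ⟨hφ, hψ⟩ i h
    rw [infSat, finSat, ihφ hφ i h, ihψ hψ i h]
  | yest φ ih =>
    intro hφ i h
    rw [infSat, finSat, ih hφ (i - 1) (fun k hk => h k (le_trans hk (Nat.sub_le i 1)))]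
  | wyest φ ih =>
    intro hφ i h
    rw [infSat, finSat, ih hφ (i - 1) (fun k hk => h k (le_trans hk (Nat.sub_le i 1)))]
  | since φ ψ ihφ ihψ =>
    rintro ⟨hφ, hψ⟩ i h
    rw [infSat, finSat]
    constructor
    · rintro ⟨j, hji, hj, hk⟩
      refine ⟨j, hji, (ihψ hψ j (fun k hk => h k (le_trans hk hji))).mp hj,
        fun k h1 h2 => (ihφ hφ k (fun k' hk' => h k' (le_trans hk' h2))).mp (hk k h1 h2)⟩
    · rintro ⟨j, hji, hj, hk⟩
      refine ⟨j, hji, (ihψ hψ j (fun k hk => h k (le_trans hk hji))).mpr hj,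
        fun k h1 h2 => (ihφ hφ k (fun k' hk' => h k' (le_trans hk' h2))).mpr (hk k h1 h2)⟩
  | trig φ ψ ihφ ihψ =>
    rintro ⟨hφ, hψ⟩ i h
    rw [infSat, finSat]
    constructor
    · rintro (hall | ⟨k, hki, hk, hj⟩)
      · exact Or.inl fun j hj => (ihψ hψ j (fun k hk => h k (le_trans hk hj))).mp (hall j hj)
      · exact Or.inr ⟨k, hki, (ihφ hφ k (fun k' hk' => h k' (le_trans hk' hki))).mp hk,
          fun j h1 h2 => (ihψ hψ j (fun k' hk' => h k' (le_trans hk' h2))).mp (hj j h1 h2)⟩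
    · rintro (hall | ⟨k, hki, hk, hj⟩)
      · exact Or.inl fun j hj => (ihψ hψ j (fun k hk => h k (le_trans hk hj))).mpr (hall j hj)
      · exact Or.inr ⟨k, hki, (ihφ hφ k (fun k' hk' => h k' (le_trans hk' hki))).mpr hk,
          fun j h1 h2 => (ihψ hψ j (fun k' hk' => h k' (le_trans hk' h2))).mpr (hj j h1 h2)⟩
  | next _ _ => exact fun h => absurd h not_false
  | wnext _ _ => exact fun h => absurd h not_false
  | until_ _ _ _ _ => exact fun h => absurd h not_false
  | release _ _ _ _ => exact fun h => absurd h not_false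

/-- A cosafetyLTL formula, or a formula `F α` with `α` pure past, is satisfiable
over infinite traces iff it is satisfiable over finite traces. -/
theorem stmt9 {Sigma : Type} [Fintype Sigma] (φ : LTLP Sigma)
    (hφ : isCosafetyLTL φ ∨ ∃ (p : Sigma) (α : LTLP Sigma), purePast α ∧ φ = LTLP.F p α) :
    (∃ σ : ℕ → Set Sigma, infSat σ φ 0) ↔
      (∃ σ : List (Set Sigma), σ ≠ [] ∧ finSat σ φ 0) := by
  rcases hφ with hc | ⟨p, α, hα, rfl⟩
  · constructor
    · rintro ⟨σ, h⟩
      obtain ⟨n, hn, h'⟩ := cos_inf_to_fin σ φ hc 0 h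
      refine ⟨(List.range n).map σ, ?_, h' n le_rfl⟩
      simp only [ne_eq, List.map_eq_nil_iff, List.range_eq_nil]
      omega
    · rintro ⟨τ, _, h⟩
      exact ⟨fun k => τ.getD k ∅, cos_fin_to_inf τ φ hc 0 h⟩
  · unfold LTLP.F LTLP.tru
    constructor
    · rintro ⟨σ, j, _, hj, _⟩
      refine ⟨(List.range (j + 1)).map σ, by simp, j, Nat.zero_le j, by simp, ?_, ?_⟩
      · exact (past_iff σ _ α hα j
          (fun k hk => (pref_getD σ (j + 1) k (by omega)).symm)).mp hj
      · intro k _ _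
        exact em _
    · rintro ⟨τ, _, j, _, hjlen, hj, _⟩
      refine ⟨fun k => τ.getD k ∅, j, Nat.zero_le j, ?_, fun k _ _ => em _⟩
      exact (past_iff (fun k => τ.getD k ∅) τ α hα j (fun _ _ => rfl)).mpr hj
end

section
/- Let φ over Σ = C ∪ U be either a safetyLTL formula (a pure-future NNF formula whose only temporal operators are wX and R) or a formula of the form G α with α pure past. Then φ is realizable over finite traces if and only if for every U0 ⊆ U there exists C0 ⊆ C such that the length-1 trace ⟨U0 ∪ C0⟩ is a model of φ. -/
variable {A : Type}

/-! Safety formulas, and `G α` with `α` pure past, stay true on every nonempty prefix of a model: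
`wX` holds vacuously at the last position, and a pure-past formula only looks backwards. So a
winning strategy already wins on the one-letter trace produced by its first answer, and
conversely a strategy answering every first move `U0` with a suitable `C0` wins by stopping at
once. -/

section Prefix

variable {A : Type}

lemma List.getD_take_of_lt {B : Type} (σ : List B) (d : B) {m i : ℕ} (h : i < m) :
    (σ.take m).getD i d = σ.getD i d := by
  simp [List.getD_eq_getElem?_getD, h]

lemma finSat_take_of_isSafetyLTL (σ : List (Set A)) (m : ℕ) {φ : LTLP A} (hφ : isSafetyLTL φ)
    {i : ℕ} (hi : i < m) (h : finSat σ φ i) : finSat (σ.take m) φ i := by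
  rcases le_or_gt σ.length m with hm | hm
  · rwa [List.take_of_length_le hm]
  induction φ generalizing i with
  | atom p | natom p => simpa only [finSat, σ.getD_take_of_lt _ hi] using h
  | and φ ψ ihφ ihψ => exact ⟨ihφ hφ.1 hi h.1, ihψ hφ.2 hi h.2⟩
  | or φ ψ ihφ ihψ => exact h.imp (ihφ hφ.1 hi) (ihψ hφ.2 hi)
  | wnext φ ih =>
    simp only [finSat, List.length_take] at h ⊢
    by_cases hi1 : i + 1 < m
    · exact h.imp (by omega) (ih hφ hi1)
    · omega
  | release φ ψ ihφ ihψ =>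
    simp only [finSat, List.length_take, lt_min_iff] at h ⊢
    rcases h with hall | ⟨k, hik, hkl, hφk, hψ⟩
    · exact Or.inl fun j hij hj => ihψ hφ.2 hj.1 (hall j hij hj.2)
    · by_cases hk : k < m
      · exact Or.inr ⟨k, hik, ⟨hk, hkl⟩, ihφ hφ.1 hk hφk,
          fun j hij hjk => ihψ hφ.2 (hjk.trans_lt hk) (hψ j hij hjk)⟩
      · exact Or.inl fun j hij hj => ihψ hφ.2 hj.1 (hψ j hij (by omega))
  | next | until_ | yest | wyest | since | trig => exact hφ.elim

lemma finSat_take_of_purePast (σ : List (Set A)) (m : ℕ) {α : LTLP A} (hα : purePast α)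
    {i : ℕ} (hi : i < m) (h : finSat σ α i) : finSat (σ.take m) α i := by
  induction α generalizing i with
  | atom p | natom p => simpa only [finSat, σ.getD_take_of_lt _ hi] using h
  | and φ ψ ihφ ihψ => exact ⟨ihφ hα.1 hi h.1, ihψ hα.2 hi h.2⟩
  | or φ ψ ihφ ihψ => exact h.imp (ihφ hα.1 hi) (ihψ hα.2 hi)
  | yest φ ih => exact ⟨h.1, ih hα (by omega) h.2⟩
  | wyest φ ih => exact h.imp_right (ih hα (by omega))
  | since φ ψ ihφ ihψ =>
    obtain ⟨j, hji, hψj, hall⟩ := h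
    exact ⟨j, hji, ihψ hα.2 (by omega) hψj,
      fun k hjk hki => ihφ hα.1 (by omega) (hall k hjk hki)⟩
  | trig φ ψ ihφ ihψ =>
    rcases h with hall | ⟨k, hki, hφk, hall⟩
    · exact Or.inl fun j hj => ihψ hα.2 (by omega) (hall j hj)
    · exact Or.inr ⟨k, hki, ihφ hα.1 (by omega) hφk,
        fun j hkj hji => ihψ hα.2 (by omega) (hall j hkj hji)⟩
  | next | wnext | until_ | release => exact hα.elim

lemma finSat_G_iff (σ : List (Set A)) (p : A) (α : LTLP A) (i : ℕ) :
    finSat σ (LTLP.G p α) i ↔ ∀ j, i ≤ j → j < σ.length → finSat σ α j := by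
  simp only [LTLP.G, LTLP.fls, finSat]
  exact ⟨fun h => h.resolve_right fun ⟨_, _, _, hp, _⟩ => hp.2 hp.1, Or.inl⟩

lemma finSat_take_G_of_purePast (σ : List (Set A)) (m : ℕ) (p : A) {α : LTLP A}
    (hα : purePast α) {i : ℕ} (h : finSat σ (LTLP.G p α) i) :
    finSat (σ.take m) (LTLP.G p α) i := by
  rw [finSat_G_iff] at h ⊢
  intro j hij hj
  simp only [List.length_take, lt_min_iff] at hj
  exact finSat_take_of_purePast σ m hα hj.1 (h j hij hj.2)

end Prefix

section Realizability

variable {C U : Type}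

lemma map_resTr_range_one (s : List (Set U) → Set C) (env : ℕ → Set U) :
    (List.range (0 + 1)).map (resTr s env) =
      [Sum.elim (fun c => c ∈ s [env 0]) (fun u => u ∈ env 0)] :=
  rfl

lemma take_one_map_resTr (s : List (Set U) → Set C) (env : ℕ → Set U) (k : ℕ) :
    ((List.range (k + 1)).map (resTr s env)).take 1 =
      [Sum.elim (fun c => c ∈ s [env 0]) (fun u => u ∈ env 0)] := by
  rw [← List.map_take, List.take_range, Nat.min_eq_left (by omega)]
  exact map_resTr_range_one s env

lemma RealizableFin.of_forall_singleton {φ : LTLP (C ⊕ U)}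
    (h : ∀ U0 : Set U, ∃ C0 : Set C, finSat [Sum.elim (fun c => c ∈ C0) (fun u => u ∈ U0)] φ 0) :
    RealizableFin φ := by
  choose c0 hc0 using h
  refine ⟨fun l => c0 (l.getD 0 ∅), fun env => ⟨0, ?_⟩⟩
  rw [map_resTr_range_one]
  exact hc0 (env 0)

lemma RealizableFin.forall_singleton {φ : LTLP (C ⊕ U)}
    (hprefix : ∀ σ : List (Set (C ⊕ U)), finSat σ φ 0 → finSat (σ.take 1) φ 0)
    (hreal : RealizableFin φ) (U0 : Set U) :
    ∃ C0 : Set C, finSat [Sum.elim (fun c => c ∈ C0) (fun u => u ∈ U0)] φ 0 := by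
  obtain ⟨s, hs⟩ := hreal
  obtain ⟨k, hk⟩ := hs fun _ => U0
  have h1 := hprefix _ hk
  rw [take_one_map_resTr] at h1
  exact ⟨s [U0], h1⟩

end Realizability

theorem stmt14_general {C U : Type} (φ : LTLP (C ⊕ U))
    (hφ : isSafetyLTL φ ∨
      ∃ (p : C ⊕ U) (α : LTLP (C ⊕ U)), purePast α ∧ φ = LTLP.G p α) :
    RealizableFin φ ↔
      ∀ U0 : Set U, ∃ C0 : Set C,
        finSat [Sum.elim (fun c => c ∈ C0) (fun u => u ∈ U0)] φ 0 := by
  have hprefix : ∀ σ : List (Set (C ⊕ U)), finSat σ φ 0 → finSat (σ.take 1) φ 0 := by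
    rcases hφ with hsafe | ⟨p, α, hα, rfl⟩
    · exact fun σ => finSat_take_of_isSafetyLTL σ 1 hsafe one_pos
    · exact fun σ => finSat_take_G_of_purePast σ 1 p hα
  exact ⟨RealizableFin.forall_singleton hprefix, RealizableFin.of_forall_singleton⟩

/-- A safetyLTL formula, or `G α` with `α` pure past, over `Σ = C ∪ U`, is
realizable over finite traces iff for every `U0 ⊆ U` there is `C0 ⊆ C` such that
the length-1 trace `⟨U0 ∪ C0⟩` is a model of `φ`. -/
theorem stmt14 {C U : Type} [Fintype C] [Fintype U] (φ : LTLP (C ⊕ U))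
    (hφ : isSafetyLTL φ ∨
      ∃ (p : C ⊕ U) (α : LTLP (C ⊕ U)), purePast α ∧ φ = LTLP.G p α) :
    RealizableFin φ ↔
      ∀ U0 : Set U, ∃ C0 : Set C,
        finSat [Sum.elim (fun c => c ∈ C0) (fun u => u ∈ U0)] φ 0 :=
  stmt14_general φ hφ
end

section
/- Let ψ be an LTL+P formula over Σ = C ∪ U (C controllable, U uncontrollable, disjoint), and let mealy(ψ) be the formula obtained from ψ by replacing every literal u with X u and every literal ¬u with X(¬u), for each u ∈ U. Then the following are equivalent over infinite traces: (1) there exists a Moore strategy t : (2^U)^* → 2^C such that for every 𝒰 = ⟨U0, U1, …⟩ ∈ (2^U)^ω the Controller-first outcome ⟨t(ε) ∪ U0, t(⟨U0⟩) ∪ U1, t(⟨U0,U1⟩) ∪ U2, …⟩ is a model of ψ; (2) there exists a strategy t' : (2^U)^+ → 2^C such that for every 𝒰 ∈ (2^U)^ω the Environment-first outcome res(t',𝒰) = ⟨U0 ∪ t'(⟨U0⟩), U1 ∪ t'(⟨U0,U1⟩), …⟩ is a model of mealy(ψ). -/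
variable {A : Type}

/-- mealy(ψ): replace every uncontrollable literal `u` (resp. `¬u`) by
`X u` (resp. `X ¬u`). -/
def mealy {C U : Type} : LTLP (C ⊕ U) → LTLP (C ⊕ U)
  | .atom (Sum.inr u) => .next (.atom (Sum.inr u))
  | .natom (Sum.inr u) => .next (.natom (Sum.inr u))
  | .atom (Sum.inl c) => .atom (Sum.inl c)
  | .natom (Sum.inl c) => .natom (Sum.inl c)
  | .and φ ψ => .and (mealy φ) (mealy ψ)
  | .or φ ψ => .or (mealy φ) (mealy ψ)
  | .next φ => .next (mealy φ)
  | .wnext φ => .wnext (mealy φ)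
  | .until_ φ ψ => .until_ (mealy φ) (mealy ψ)
  | .release φ ψ => .release (mealy φ) (mealy ψ)
  | .yest φ => .yest (mealy φ)
  | .wyest φ => .wyest (mealy φ)
  | .since φ ψ => .since (mealy φ) (mealy ψ)
  | .trig φ ψ => .trig (mealy φ) (mealy ψ)

/-- The Controller-first (Moore) outcome: at position `i`, Controller plays
`t(⟨U0,…,U_{i-1}⟩)` (in particular `t(ε)` at position 0). -/
def resMoore {C U : Type} (t : List (Set U) → Set C) (env : ℕ → Set U) :
    ℕ → Set (C ⊕ U) :=
  fun i => Sum.elim (fun c => c ∈ t ((List.range i).map env)) (fun u => u ∈ env i)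


/-!
`mealy ψ` holds on a trace iff `ψ` holds on the trace whose uncontrollable letters are advanced
by one step. Advancing an Environment-first outcome gives a Controller-first outcome in which the
environment's first move is absorbed into the strategy; conversely, a Moore strategy is a Mealy
strategy against an environment whose first move `∅` is ignored.
-/

def shiftInr {C U : Type} (σ : ℕ → Set (C ⊕ U)) : ℕ → Set (C ⊕ U) :=
  fun i => Sum.elim (fun c => Sum.inl c ∈ σ i) (fun u => Sum.inr u ∈ σ (i + 1))

theorem infSat_mealy_iff {C U : Type} (σ : ℕ → Set (C ⊕ U)) (ψ : LTLP (C ⊕ U)) (i : ℕ) :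
    infSat σ (mealy ψ) i ↔ infSat (shiftInr σ) ψ i := by
  induction ψ generalizing i with
  | atom p | natom p => cases p <;> rfl
  | _ => simp_all only [mealy, infSat]

theorem shiftInr_resTr {C U : Type} (t : List (Set U) → Set C) (env : ℕ → Set U) :
    shiftInr (resTr t env) = resMoore (fun l => t (env 0 :: l)) (Stream'.tail env) := by
  funext i x
  cases x <;>
    simp only [shiftInr, resTr, resMoore, List.range_succ_eq_map, List.map_cons, List.map_map] <;>
    rfl

theorem stmt16_general {C U : Type} (ψ : LTLP (C ⊕ U)) :
    (∃ t : List (Set U) → Set C, ∀ env : ℕ → Set U, infSat (resMoore t env) ψ 0) ↔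
      (∃ t' : List (Set U) → Set C, ∀ env : ℕ → Set U,
        infSat (resTr t' env) (mealy ψ) 0) := by
  simp only [infSat_mealy_iff, shiftInr_resTr]
  constructor
  · rintro ⟨t, ht⟩
    exact ⟨fun l => t l.tail, fun env => ht (Stream'.tail env)⟩
  · rintro ⟨t', ht⟩
    exact ⟨fun l => t' (∅ :: l), fun env => ht (Stream'.cons ∅ env)⟩

/-- Controller wins `ψ` moving first (Moore) iff Controller wins `mealy(ψ)`
moving second (Mealy), over infinite traces. -/
theorem stmt16 {C U : Type} [Fintype C] [Fintype U] (ψ : LTLP (C ⊕ U)) :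
    (∃ t : List (Set U) → Set C, ∀ env : ℕ → Set U, infSat (resMoore t env) ψ 0) ↔
      (∃ t' : List (Set U) → Set C, ∀ env : ℕ → Set U,
        infSat (resTr t' env) (mealy ψ) 0) :=
  stmt16_general ψ
end

section
/- Let Σ be a finite set and let φ be a safetyLTL formula over Σ, i.e., a pure-future NNF formula whose only temporal operators are wX and R. Then the language L_F(φ) ⊆ (2^Σ)^+ of finite-trace models of φ satisfies: if L_F(φ) ≠ ∅, then there exists σ0 ∈ 2^Σ with ⟨σ0⟩ ∈ L_F(φ); moreover L_F(φ) is closed under taking the length-1 prefix, i.e., every σ = ⟨σ0,…,σn⟩ ∈ L_F(φ) satisfies ⟨σ0⟩ ∈ L_F(φ). -/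
variable {A : Type}

theorem safety_prefix1 {Sigma : Type} : ∀ (φ : LTLP Sigma), isSafetyLTL φ →
    ∀ (σ0 : Set Sigma) (rest : List (Set Sigma)),
      finSat (σ0 :: rest) φ 0 → finSat [σ0] φ 0 := by
  intro φ
  induction φ with
  | atom p => intro _ σ0 rest h; exact h
  | natom p => intro _ σ0 rest h; exact h
  | and φ ψ ihφ ihψ =>
      intro hφ σ0 rest h
      exact ⟨ihφ hφ.1 σ0 rest h.1, ihψ hφ.2 σ0 rest h.2⟩
  | or φ ψ ihφ ihψ =>
      intro hφ σ0 rest h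
      exact h.elim (fun h => Or.inl (ihφ hφ.1 σ0 rest h))
        (fun h => Or.inr (ihψ hφ.2 σ0 rest h))
  | wnext φ _ => intro _ σ0 rest _; exact Or.inl rfl
  | release φ ψ ihφ ihψ =>
      intro hφ σ0 rest h
      left
      intro j hj hj1
      have hj0 : j = 0 := by simp at hj1; omega
      subst hj0
      apply ihψ hφ.2 σ0 rest
      rcases h with h | ⟨k, hk0, _, _, hψ⟩
      · exact h 0 le_rfl (by simp)
      · exact hψ 0 le_rfl hk0
  | next φ _ => intro hφ; exact (hφ : False).elim
  | until_ φ ψ _ _ => intro hφ; exact (hφ : False).elim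
  | yest φ _ => intro hφ; exact (hφ : False).elim
  | wyest φ _ => intro hφ; exact (hφ : False).elim
  | since φ ψ _ _ => intro hφ; exact (hφ : False).elim
  | trig φ ψ _ _ => intro hφ; exact (hφ : False).elim

/-- For a safetyLTL formula `φ`: if the language of finite-trace models of `φ`
is nonempty then it contains a word of length 1; moreover it is closed under
taking the length-1 prefix. -/
theorem stmt18 {Sigma : Type} [Fintype Sigma] (φ : LTLP Sigma)
    (hφ : isSafetyLTL φ) :
    ((∃ σ : List (Set Sigma), σ ≠ [] ∧ finSat σ φ 0) →
      ∃ σ0 : Set Sigma, finSat [σ0] φ 0) ∧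
    (∀ (σ0 : Set Sigma) (rest : List (Set Sigma)),
      finSat (σ0 :: rest) φ 0 → finSat [σ0] φ 0) := by
  refine ⟨?_, safety_prefix1 φ hφ⟩
  rintro ⟨σ, hne, hsat⟩
  cases σ with
  | nil => exact absurd rfl hne
  | cons σ0 rest => exact ⟨σ0, safety_prefix1 φ hφ σ0 rest hsat⟩
end
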